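/- Sum-rate converse: if M1, M2 are independent messages with entropies nR1, nR2, H(M2 | Y^n) ≤ nε and H(M1 | Y^n, M2) ≤ nε, and (M1, M2, Y^{i-1}) → X_i → Y_i is Markov for each i with Y_i = f(X_i) deterministic, then n(R1 + R2) ≤ Σ_{i=1}^n H(Y_i) + 2nε. -/

import Mathlib

/-!
Independence gives `H(M1) + H(M2) = H(M1, M2) ≤ H(M1, Yⁿ, M2)`, and the chain rule splits the
right-hand side as `H(M1 | Yⁿ, M2) + H(M2 | Yⁿ) + H(Yⁿ)`. The two Fano terms are at most `nε`
each, and `H(Yⁿ) ≤ ∑ᵢ H(Yᵢ)` by subadditivity, which is Gibbs' inequality against the product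
of the marginals.
-/

open scoped Classical BigOperators

namespace SecBC

variable {Ω : Type*} [Fintype Ω]

/-- Probability that the random variable `X` takes value `a`, under pmf `p` on `Ω`. -/
noncomputable def prob (p : Ω → ℝ) {A : Type*} [Fintype A] [DecidableEq A]
    (X : Ω → A) (a : A) : ℝ := ∑ ω, if X ω = a then p ω else 0

/-- Shannon entropy of a random variable. -/
noncomputable def ent (p : Ω → ℝ) {A : Type*} [Fintype A] [DecidableEq A]
    (X : Ω → A) : ℝ := -∑ a, prob p X a * Real.log (prob p X a)

/-- Conditional Shannon entropy `H(X | Y)`. -/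
noncomputable def condEnt (p : Ω → ℝ) {A B : Type*} [Fintype A] [DecidableEq A]
    [Fintype B] [DecidableEq B] (X : Ω → A) (Y : Ω → B) : ℝ :=
  ent p (fun ω => (X ω, Y ω)) - ent p Y

/-- Mutual information `I(X ; Y)`. -/
noncomputable def mutInfo (p : Ω → ℝ) {A B : Type*} [Fintype A] [DecidableEq A]
    [Fintype B] [DecidableEq B] (X : Ω → A) (Y : Ω → B) : ℝ :=
  ent p X + ent p Y - ent p (fun ω => (X ω, Y ω))

/-- Conditional mutual information `I(X ; Y | Z)`. -/
noncomputable def condMutInfo (p : Ω → ℝ) {A B C : Type*} [Fintype A] [DecidableEq A]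
    [Fintype B] [DecidableEq B] [Fintype C] [DecidableEq C]
    (X : Ω → A) (Y : Ω → B) (Z : Ω → C) : ℝ :=
  condEnt p X Z + condEnt p Y Z - condEnt p (fun ω => (X ω, Y ω)) Z

/-- Independence of two random variables. -/
def IndepRV (p : Ω → ℝ) {A B : Type*} [Fintype A] [DecidableEq A]
    [Fintype B] [DecidableEq B] (X : Ω → A) (Y : Ω → B) : Prop :=
  ∀ a b, prob p (fun ω => (X ω, Y ω)) (a, b) = prob p X a * prob p Y b

/-- Markov chain `X → Y → Z`: conditional independence of `X` and `Z` given `Y`. -/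
def MarkovChain (p : Ω → ℝ) {A B C : Type*} [Fintype A] [DecidableEq A]
    [Fintype B] [DecidableEq B] [Fintype C] [DecidableEq C]
    (X : Ω → A) (Y : Ω → B) (Z : Ω → C) : Prop :=
  ∀ a b c, prob p (fun ω => (X ω, Y ω, Z ω)) (a, b, c) * prob p Y b
    = prob p (fun ω => (X ω, Y ω)) (a, b) * prob p (fun ω => (Y ω, Z ω)) (b, c)

/-- `p` is a probability mass function on the finite sample space `Ω`. -/
structure IsPMF (p : Ω → ℝ) : Prop where
  nonneg : ∀ ω, 0 ≤ p ω
  sum_one : ∑ ω, p ω = 1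

theorem mul_log_le_mul_log_add_sub {r q : ℝ} (hr : 0 ≤ r) (hq : 0 ≤ q)
    (hrq : 0 < r → 0 < q) : r * Real.log q ≤ r * Real.log r + (q - r) := by
  rcases hr.eq_or_lt with rfl | hr
  · simpa using hq
  have hq_pos := hrq hr
  have hlog := Real.log_le_sub_one_of_pos (div_pos hq_pos hr)
  rw [Real.log_div hq_pos.ne' hr.ne'] at hlog
  calc r * Real.log q = r * Real.log r + r * (Real.log q - Real.log r) := by ring
    _ ≤ r * Real.log r + r * (q / r - 1) := by gcongr
    _ = r * Real.log r + (q - r) := by field_simp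

/-- Gibbs' inequality. -/
theorem sum_mul_log_le_sum_mul_log {ι : Type*} [Fintype ι] {r q : ι → ℝ}
    (hr : ∀ i, 0 ≤ r i) (hq : ∀ i, 0 ≤ q i) (hrq : ∀ i, 0 < r i → 0 < q i)
    (hsum : ∑ i, q i ≤ ∑ i, r i) :
    ∑ i, r i * Real.log (q i) ≤ ∑ i, r i * Real.log (r i) := by
  have hterm := fun i => mul_log_le_mul_log_add_sub (hr i) (hq i) (hrq i)
  have := Finset.sum_le_sum fun i (_ : i ∈ Finset.univ) => hterm i
  rw [Finset.sum_add_distrib, Finset.sum_sub_distrib] at this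
  linarith

section Entropy

variable {p : Ω → ℝ} {A B : Type*} [Fintype A] [DecidableEq A] [Fintype B] [DecidableEq B]

theorem prob_nonneg (hp : IsPMF p) (X : Ω → A) (a : A) : 0 ≤ prob p X a :=
  Finset.sum_nonneg fun ω _ => by split_ifs <;> simp [hp.nonneg ω]

theorem sum_prob_mul (X : Ω → A) (h : A → ℝ) :
    ∑ a, prob p X a * h a = ∑ ω, p ω * h (X ω) := by
  simp only [prob, Finset.sum_mul, ite_mul, zero_mul]
  rw [Finset.sum_comm]
  simp

theorem sum_prob (hp : IsPMF p) (X : Ω → A) : ∑ a, prob p X a = 1 := by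
  simpa [hp.sum_one] using sum_prob_mul (p := p) X (fun _ => 1)

theorem prob_le_prob_comp (hp : IsPMF p) (X : Ω → A) (g : A → B) (a : A) :
    prob p X a ≤ prob p (fun ω => g (X ω)) (g a) :=
  Finset.sum_le_sum fun ω _ => by
    by_cases h : X ω = a
    · simp [h]
    · rw [if_neg h]; split_ifs <;> simp [hp.nonneg ω]

theorem ent_eq_sum_negMulLog (X : Ω → A) : ent p X = ∑ a, Real.negMulLog (prob p X a) := by
  simp [ent, Real.negMulLog]

theorem ent_of_subsingleton [Subsingleton A] (hp : IsPMF p) (X : Ω → A) : ent p X = 0 := by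
  have hprob : ∀ a, prob p X a = 1 := fun a => by
    simp [prob, Subsingleton.elim _ a, hp.sum_one]
  simp [ent_eq_sum_negMulLog, hprob]

theorem ent_le_of_eq_comp (hp : IsPMF p) {X : Ω → A} {Y : Ω → B} (g : B → A)
    (hXY : ∀ ω, X ω = g (Y ω)) : ent p X ≤ ent p Y := by
  obtain rfl : X = fun ω => g (Y ω) := funext hXY
  have hpush : ∑ a, prob p (fun ω => g (Y ω)) a * Real.log (prob p (fun ω => g (Y ω)) a)
      = ∑ b, prob p Y b * Real.log (prob p (fun ω => g (Y ω)) (g b)) := by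
    rw [sum_prob_mul, sum_prob_mul]
  rw [ent, ent, hpush, neg_le_neg_iff]
  refine Finset.sum_le_sum fun b _ => ?_
  rcases (prob_nonneg hp Y b).eq_or_lt with h | h
  · simp [← h]
  · gcongr
    exact prob_le_prob_comp hp Y g b

theorem ent_eq_of_eq_comp (hp : IsPMF p) {X : Ω → A} {Y : Ω → B} (g : B → A) (h : A → B)
    (hXY : ∀ ω, X ω = g (Y ω)) (hYX : ∀ ω, Y ω = h (X ω)) : ent p X = ent p Y :=
  (ent_le_of_eq_comp hp g hXY).antisymm (ent_le_of_eq_comp hp h hYX)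

theorem ent_pair_eq_condEnt_add (X : Ω → A) (Y : Ω → B) :
    ent p (fun ω => (X ω, Y ω)) = condEnt p X Y + ent p Y := by
  rw [condEnt, sub_add_cancel]

theorem ent_pair_of_indepRV (hp : IsPMF p) {X : Ω → A} {Y : Ω → B} (hXY : IndepRV p X Y) :
    ent p (fun ω => (X ω, Y ω)) = ent p X + ent p Y := by
  have hprod : ∀ a b, prob p (fun ω => (X ω, Y ω)) (a, b) = prob p X a * prob p Y b := hXY
  simp only [ent_eq_sum_negMulLog, Fintype.sum_prod_type, hprod, Real.negMulLog_mul,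
    Finset.sum_add_distrib, ← Finset.sum_mul, ← Finset.mul_sum, sum_prob hp, one_mul]

theorem ent_pair_le_add (hp : IsPMF p) (X : Ω → A) (Y : Ω → B) :
    ent p (fun ω => (X ω, Y ω)) ≤ ent p X + ent p Y := by
  set r := prob p (fun ω => (X ω, Y ω))
  have hrX : ∀ ab : A × B, r ab ≤ prob p X ab.1 := fun ab =>
    prob_le_prob_comp hp (fun ω => (X ω, Y ω)) Prod.fst ab
  have hrY : ∀ ab : A × B, r ab ≤ prob p Y ab.2 := fun ab =>
    prob_le_prob_comp hp (fun ω => (X ω, Y ω)) Prod.snd ab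
  have hgibbs := sum_mul_log_le_sum_mul_log (r := r)
    (q := fun ab => prob p X ab.1 * prob p Y ab.2) (prob_nonneg hp _)
    (fun ab => mul_nonneg (prob_nonneg hp X _) (prob_nonneg hp Y _))
    (fun ab h => mul_pos (h.trans_le (hrX ab)) (h.trans_le (hrY ab)))
    (by rw [sum_prob hp, Fintype.sum_prod_type]
        simp [← Finset.mul_sum, sum_prob hp])
  have hsplit : ∀ ab : A × B, r ab * Real.log (prob p X ab.1 * prob p Y ab.2)
      = r ab * Real.log (prob p X ab.1) + r ab * Real.log (prob p Y ab.2) := fun ab => by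
    rcases (prob_nonneg hp (fun ω => (X ω, Y ω)) ab).eq_or_lt with h | h
    · simp [r, ← h]
    · rw [Real.log_mul (h.trans_le (hrX ab)).ne' (h.trans_le (hrY ab)).ne', mul_add]
  have hmargX : ∑ ab : A × B, r ab * Real.log (prob p X ab.1)
      = ∑ a, prob p X a * Real.log (prob p X a) := by
    simp only [r, sum_prob_mul]
  have hmargY : ∑ ab : A × B, r ab * Real.log (prob p Y ab.2)
      = ∑ b, prob p Y b * Real.log (prob p Y b) := by
    simp only [r, sum_prob_mul]
  simp only [hsplit, Finset.sum_add_distrib, hmargX, hmargY] at hgibbs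
  rw [ent, ent, ent]
  linarith

theorem ent_pi_le_sum (hp : IsPMF p) :
    ∀ {m : ℕ} (Z : Fin m → Ω → A), ent p (fun ω i => Z i ω) ≤ ∑ i, ent p (Z i)
  | 0, Z => by simp [ent_of_subsingleton hp]
  | m + 1, Z => by
    calc ent p (fun ω i => Z i ω)
        = ent p (fun ω => (Z (Fin.last m) ω, fun i : Fin m => Z i.castSucc ω)) :=
          ent_eq_of_eq_comp hp (fun z => Fin.snoc z.2 z.1) (fun v => (v (Fin.last m), Fin.init v))
            (fun ω => (Fin.snoc_init_self _).symm) (fun ω => rfl)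
      _ ≤ ent p (Z (Fin.last m)) + ent p (fun ω i => Z (Fin.castSucc i) ω) :=
          ent_pair_le_add hp _ _
      _ ≤ ent p (Z (Fin.last m)) + ∑ i : Fin m, ent p (Z i.castSucc) := by
          gcongr
          exact ent_pi_le_sum hp _
      _ = ∑ i, ent p (Z i) := by rw [Fin.sum_univ_castSucc, add_comm]

end Entropy

theorem statement13_general {Ω : Type*} [Fintype Ω] {p : Ω → ℝ} (hp : IsPMF p)
    {A B 𝒴 : Type*} [Fintype A] [DecidableEq A] [Fintype B] [DecidableEq B]
    [Fintype 𝒴] [DecidableEq 𝒴]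
    (n : ℕ) (M1 : Ω → A) (M2 : Ω → B) (Y : Fin n → Ω → 𝒴)
    (R1 R2 ε : ℝ)
    (hindep : IndepRV p M1 M2)
    (hent1 : ent p M1 = n * R1)
    (hent2 : ent p M2 = n * R2)
    (hFano2 : condEnt p M2 (fun ω => fun i => Y i ω) ≤ n * ε)
    (hFano1 : condEnt p M1 (fun ω => ((fun i => Y i ω), M2 ω)) ≤ n * ε) :
    (n : ℝ) * (R1 + R2) ≤ (∑ i, ent p (Y i)) + 2 * n * ε := by
  set Yn : Ω → Fin n → 𝒴 := fun ω i => Y i ω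
  calc (n : ℝ) * (R1 + R2) = ent p (fun ω => (M1 ω, M2 ω)) := by
        rw [ent_pair_of_indepRV hp hindep, hent1, hent2, mul_add]
    _ ≤ ent p (fun ω => (M1 ω, (Yn ω, M2 ω))) :=
        ent_le_of_eq_comp hp (fun z => (z.1, z.2.2)) fun _ => rfl
    _ = condEnt p M1 (fun ω => (Yn ω, M2 ω)) + condEnt p M2 Yn + ent p Yn := by
        have hswap : ent p (fun ω => (Yn ω, M2 ω)) = ent p (fun ω => (M2 ω, Yn ω)) :=
          ent_eq_of_eq_comp hp Prod.swap Prod.swap (fun _ => rfl) (fun _ => rfl)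
        rw [ent_pair_eq_condEnt_add, hswap, ent_pair_eq_condEnt_add, add_assoc]
    _ ≤ n * ε + n * ε + ∑ i, ent p (Y i) := by
        gcongr
        exact ent_pi_le_sum hp Y
    _ = (∑ i, ent p (Y i)) + 2 * n * ε := by ring

/-- Sum-rate converse: with independent messages of entropies `nR1`, `nR2`,
Fano bounds `H(M2|Yⁿ) ≤ nε` and `H(M1|Yⁿ,M2) ≤ nε`, Markov chains
`(M1,M2,Y^{i-1}) → Xᵢ → Yᵢ` and `Yᵢ = f(Xᵢ)` deterministic,
one has `n(R1+R2) ≤ ∑ᵢ H(Yᵢ) + 2nε`. -/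
theorem statement13 {Ω : Type*} [Fintype Ω] {p : Ω → ℝ} (hp : IsPMF p)
    {A B 𝒳 𝒴 : Type*} [Fintype A] [DecidableEq A] [Fintype B] [DecidableEq B]
    [Fintype 𝒳] [DecidableEq 𝒳] [Fintype 𝒴] [DecidableEq 𝒴]
    (n : ℕ) (M1 : Ω → A) (M2 : Ω → B) (X : Fin n → Ω → 𝒳) (Y : Fin n → Ω → 𝒴)
    (f : 𝒳 → 𝒴) (R1 R2 ε : ℝ) (hε : 0 ≤ ε)
    (hindep : IndepRV p M1 M2)
    (hent1 : ent p M1 = n * R1)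
    (hent2 : ent p M2 = n * R2)
    (hdet : ∀ i ω, Y i ω = f (X i ω))
    (hmarkov : ∀ i : Fin n,
      MarkovChain p
        (fun ω => (M1 ω, M2 ω, (fun j : {j : Fin n // j < i} => Y j ω)))
        (X i) (Y i))
    (hFano2 : condEnt p M2 (fun ω => fun i => Y i ω) ≤ n * ε)
    (hFano1 : condEnt p M1 (fun ω => ((fun i => Y i ω), M2 ω)) ≤ n * ε) :
    (n : ℝ) * (R1 + R2) ≤ (∑ i, ent p (Y i)) + 2 * n * ε :=
  statement13_general hp n M1 M2 Y R1 R2 ε hindep hent1 hent2 hFano2 hFano1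

end SecBC
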